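/- arXiv:1507.03432 — 3 statements merged into one kernel-verified Lean document; each statement's English description precedes it below -/
import Mathlib

section
/- Let m ∈ ℕ, let A⁰, A¹, B⁰, B¹ be real m×m matrices, let c⁰ : ℝᵐ → ℝᵐ be twice continuously differentiable and c¹ : ℝᵐ → ℝᵐ be continuously differentiable. Let Φ⁰, Φ¹ : ℝ² → ℝᵐ be continuously differentiable functions of (s,t) satisfying, everywhere, the limit system A⁰·∂_tΦ⁰ + B⁰·∂_sΦ⁰ + c⁰(Φ⁰) = 0 and the first-order correction system A⁰·∂_tΦ¹ + B⁰·∂_sΦ¹ + (Dc⁰)(Φ⁰)·Φ¹ = −(A¹·∂_tΦ⁰ + B¹·∂_sΦ⁰ + c¹(Φ⁰)), where (Dc⁰)(Φ⁰) is the Jacobi matrix of c⁰ at Φ⁰. Then for every compact set Q ⊆ ℝ² there exists C ≥ 0 such that for all ε ∈ [0,1] and all (s,t) ∈ Q the function Φ_ε := Φ⁰ + ε²Φ¹ satisfies ‖(A⁰ + ε²A¹)·∂_tΦ_ε + (B⁰ + ε²B¹)·∂_sΦ_ε + c⁰(Φ_ε) + ε² c¹(Φ_ε)‖ ≤ C ε⁴.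 -/
/-!
Write `δ = ε²`, `x = Φ⁰`, `y = Φ¹`. Subtracting `δ` times the correction system and the limit
system from the `ε`-system, the residual of `Φ⁰ + δΦ¹` is exactly
`δ² (A¹ ∂_tΦ¹ + B¹ ∂_sΦ¹) + (c⁰(x + δy) - c⁰(x) - δ Dc⁰(x) y) + δ (c¹(x + δy) - c¹(x))`.
The first term is `O(δ²)` because `∂Φ¹` is bounded on `Q`; the second is a first-order Taylor
remainder, `O(δ²)` because `Dc⁰` is Lipschitz on a ball containing `Φ⁰(Q)` and
`Φ⁰(Q) + δΦ¹(Q)`; the third is `δ · O(δ)` because `c¹` is Lipschitz there.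
-/

noncomputable section

/-- Partial derivative with respect to the time variable `t` (second component). -/
def pt {E : Type*} [NormedAddCommGroup E] [NormedSpace ℝ E]
    (f : ℝ × ℝ → E) (p : ℝ × ℝ) : E :=
  deriv (fun t => f (p.1, t)) p.2

/-- Partial derivative with respect to the space variable `s` (first component). -/
def ps {E : Type*} [NormedAddCommGroup E] [NormedSpace ℝ E]
    (f : ℝ × ℝ → E) (p : ℝ × ℝ) : E :=
  deriv (fun s => f (s, p.2)) p.1

open Matrix Metric Set
open scoped NNReal

section PartialDerivatives

variable {E : Type*} [NormedAddCommGroup E] [NormedSpace ℝ E]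

lemma pt_eq_fderiv {f : ℝ × ℝ → E} (hf : Differentiable ℝ f) (p : ℝ × ℝ) :
    pt f p = fderiv ℝ f p (0, 1) :=
  ((hf p).hasFDerivAt.comp_hasDerivAt p.2
    ((hasDerivAt_const p.2 p.1).prodMk (hasDerivAt_id p.2))).deriv

lemma ps_eq_fderiv {f : ℝ × ℝ → E} (hf : Differentiable ℝ f) (p : ℝ × ℝ) :
    ps f p = fderiv ℝ f p (1, 0) :=
  ((hf p).hasFDerivAt.comp_hasDerivAt p.1
    ((hasDerivAt_id p.1).prodMk (hasDerivAt_const p.1 p.2))).deriv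

lemma pt_add_smul {f g : ℝ × ℝ → E} (hf : Differentiable ℝ f) (hg : Differentiable ℝ g)
    (c : ℝ) (p : ℝ × ℝ) : pt (fun q => f q + c • g q) p = pt f p + c • pt g p := by
  have hfg : Differentiable ℝ (fun q => f q + c • g q) := by fun_prop
  rw [pt_eq_fderiv hfg, pt_eq_fderiv hf, pt_eq_fderiv hg,
    fderiv_fun_add (g := fun q => c • g q) (hf p) ((hg p).const_smul c),
    fderiv_fun_const_smul (hg p)]
  rfl

lemma ps_add_smul {f g : ℝ × ℝ → E} (hf : Differentiable ℝ f) (hg : Differentiable ℝ g)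
    (c : ℝ) (p : ℝ × ℝ) : ps (fun q => f q + c • g q) p = ps f p + c • ps g p := by
  have hfg : Differentiable ℝ (fun q => f q + c • g q) := by fun_prop
  rw [ps_eq_fderiv hfg, ps_eq_fderiv hf, ps_eq_fderiv hg,
    fderiv_fun_add (g := fun q => c • g q) (hf p) ((hg p).const_smul c),
    fderiv_fun_const_smul (hg p)]
  rfl

lemma ContDiff.continuous_pt {f : ℝ × ℝ → E} (hf : ContDiff ℝ 1 f) : Continuous (pt f) := by
  simp_rw [funext (pt_eq_fderiv (hf.differentiable one_ne_zero))]
  exact (hf.continuous_fderiv one_ne_zero).clm_apply continuous_const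

lemma ContDiff.continuous_ps {f : ℝ × ℝ → E} (hf : ContDiff ℝ 1 f) : Continuous (ps f) := by
  simp_rw [funext (ps_eq_fderiv (hf.differentiable one_ne_zero))]
  exact (hf.continuous_fderiv one_ne_zero).clm_apply continuous_const

end PartialDerivatives

lemma Convex.norm_sub_sub_fderiv_le_of_lipschitzOnWith
    {E F : Type*} [NormedAddCommGroup E] [NormedSpace ℝ E]
    [NormedAddCommGroup F] [NormedSpace ℝ F] {f : E → F} {s : Set E} {K : ℝ≥0}
    (hs : Convex ℝ s) (hf : ∀ x ∈ s, DifferentiableAt ℝ f x)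
    (hK : LipschitzOnWith K (fderiv ℝ f) s) {x y : E} (hx : x ∈ s) (hy : y ∈ s) :
    ‖f y - f x - fderiv ℝ f x (y - x)‖ ≤ K * ‖y - x‖ ^ 2 := by
  have hseg : segment ℝ x y ⊆ s := hs.segment_subset hx hy
  have bound : ∀ z ∈ segment ℝ x y, ‖fderiv ℝ f z - fderiv ℝ f x‖ ≤ K * ‖y - x‖ := by
    intro z hz
    calc ‖fderiv ℝ f z - fderiv ℝ f x‖ ≤ K * ‖z - x‖ := by
          simpa only [dist_eq_norm] using hK.dist_le_mul z (hseg hz) x hx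
      _ ≤ K * ‖y - x‖ := by gcongr; exact norm_sub_le_of_mem_segment hz
  calc ‖f y - f x - fderiv ℝ f x (y - x)‖ ≤ K * ‖y - x‖ * ‖y - x‖ :=
        (convex_segment x y).norm_image_sub_le_of_norm_fderiv_le' (fun z hz => hf z (hseg hz))
          bound (left_mem_segment ℝ x y) (right_mem_segment ℝ x y)
    _ = K * ‖y - x‖ ^ 2 := by ring

/-- Here `l` plays the role of `Dc₀(x) y`. -/
lemma residual_eq {n R : Type*} [Fintype n] [CommRing R] {A₀ A₁ B₀ B₁ : Matrix n n R}
    {c₀ c₁ : (n → R) → n → R} {x y a₀ a₁ b₀ b₁ l : n → R} (δ : R)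
    (hlimit : A₀ *ᵥ a₀ + B₀ *ᵥ b₀ + c₀ x = 0)
    (hcorr : A₀ *ᵥ a₁ + B₀ *ᵥ b₁ + l = -(A₁ *ᵥ a₀ + B₁ *ᵥ b₀ + c₁ x)) :
    (A₀ + δ • A₁) *ᵥ (a₀ + δ • a₁) + (B₀ + δ • B₁) *ᵥ (b₀ + δ • b₁)
        + c₀ (x + δ • y) + δ • c₁ (x + δ • y)
      = δ ^ 2 • (A₁ *ᵥ a₁ + B₁ *ᵥ b₁) + (c₀ (x + δ • y) - c₀ x - δ • l)
        + δ • (c₁ (x + δ • y) - c₁ x) := by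
  rw [eq_neg_of_add_eq_zero_right hlimit, eq_sub_of_add_eq' hcorr]
  simp only [Matrix.add_mulVec, Matrix.mulVec_add, Matrix.mulVec_smul, Matrix.smul_mulVec]
  module

lemma norm_residual_le {n : Type*} [Fintype n] {A₀ A₁ B₀ B₁ : Matrix n n ℝ}
    {c₀ c₁ : (n → ℝ) → n → ℝ} {s : Set (n → ℝ)} {M L : ℝ≥0} {x y a₀ a₁ b₀ b₁ : n → ℝ}
    {δ : ℝ} (hs : Convex ℝ s) (hc₀ : Differentiable ℝ c₀)
    (hM : LipschitzOnWith M (fderiv ℝ c₀) s) (hL : LipschitzOnWith L c₁ s)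
    (hx : x ∈ s) (hxy : x + δ • y ∈ s) (hδ : 0 ≤ δ)
    (hlimit : A₀ *ᵥ a₀ + B₀ *ᵥ b₀ + c₀ x = 0)
    (hcorr : A₀ *ᵥ a₁ + B₀ *ᵥ b₁ + fderiv ℝ c₀ x y = -(A₁ *ᵥ a₀ + B₁ *ᵥ b₀ + c₁ x)) :
    ‖(A₀ + δ • A₁) *ᵥ (a₀ + δ • a₁) + (B₀ + δ • B₁) *ᵥ (b₀ + δ • b₁)
        + c₀ (x + δ • y) + δ • c₁ (x + δ • y)‖
      ≤ δ ^ 2 * (‖A₁ *ᵥ a₁ + B₁ *ᵥ b₁‖ + M * ‖y‖ ^ 2 + L * ‖y‖) := by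
  have hstep : ‖δ • y‖ = δ * ‖y‖ := by rw [norm_smul, Real.norm_of_nonneg hδ]
  have htaylor : ‖c₀ (x + δ • y) - c₀ x - δ • fderiv ℝ c₀ x y‖ ≤ M * (δ * ‖y‖) ^ 2 := by
    have := hs.norm_sub_sub_fderiv_le_of_lipschitzOnWith (fun z _ => hc₀ z) hM hx hxy
    rwa [add_sub_cancel_left, map_smul, hstep] at this
  have hlip : ‖c₁ (x + δ • y) - c₁ x‖ ≤ L * (δ * ‖y‖) := by
    have := hL.dist_le_mul _ hxy x hx
    rwa [dist_eq_norm, dist_eq_norm, add_sub_cancel_left, hstep] at this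
  rw [residual_eq δ hlimit hcorr]
  calc _ ≤ ‖δ ^ 2 • (A₁ *ᵥ a₁ + B₁ *ᵥ b₁)‖ + ‖c₀ (x + δ • y) - c₀ x - δ • fderiv ℝ c₀ x y‖
          + ‖δ • (c₁ (x + δ • y) - c₁ x)‖ := norm_add₃_le
    _ ≤ δ ^ 2 * ‖A₁ *ᵥ a₁ + B₁ *ᵥ b₁‖ + M * (δ * ‖y‖) ^ 2 + δ * (L * (δ * ‖y‖)) := by
        rw [norm_smul, norm_smul, Real.norm_of_nonneg (by positivity), Real.norm_of_nonneg hδ]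
        gcongr
    _ = _ := by ring

lemma IsCompact.exists_pos_bound_of_continuous {α E : Type*} [TopologicalSpace α]
    [SeminormedAddCommGroup E] {Q : Set α} {f : α → E} (hQ : IsCompact Q) (hf : Continuous f) :
    ∃ C > 0, ∀ p ∈ Q, ‖f p‖ ≤ C := by
  simpa using (hQ.image hf).isBounded.exists_pos_norm_le

lemma add_smul_mem_closedBall_zero {E : Type*} [SeminormedAddCommGroup E] [NormedSpace ℝ E]
    {x y : E} {r s δ : ℝ} (hx : ‖x‖ ≤ r) (hy : ‖y‖ ≤ s) (hδ₀ : 0 ≤ δ) (hδ₁ : δ ≤ 1) :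
    x + δ • y ∈ closedBall 0 (r + s) := by
  refine mem_closedBall_zero_iff.2 ((norm_add_le _ _).trans (add_le_add hx ?_))
  rw [norm_smul, Real.norm_of_nonneg hδ₀]
  exact (mul_le_of_le_one_left (norm_nonneg y) hδ₁).trans hy

/-- If `Φ⁰` solves the limit system and `Φ¹` its first-order correction
system, then `Φ_ε = Φ⁰ + ε²Φ¹` satisfies the ε-dependent system
`A_ε·∂_tΦ_ε + B_ε·∂_sΦ_ε + c_ε(Φ_ε) = 0` up to a residual of order `O(ε⁴)`,
uniformly on compact sets. -/
theorem asymptotic_expansion_exact_fourth_order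
    (m : ℕ) (A0 A1 B0 B1 : Matrix (Fin m) (Fin m) ℝ)
    (c0 : (Fin m → ℝ) → Fin m → ℝ) (hc0 : ContDiff ℝ 2 c0)
    (c1 : (Fin m → ℝ) → Fin m → ℝ) (hc1 : ContDiff ℝ 1 c1)
    (Φ0 Φ1 : ℝ × ℝ → Fin m → ℝ) (hΦ0 : ContDiff ℝ 1 Φ0) (hΦ1 : ContDiff ℝ 1 Φ1)
    (hlimit : ∀ p : ℝ × ℝ,
      A0.mulVec (pt Φ0 p) + B0.mulVec (ps Φ0 p) + c0 (Φ0 p) = 0)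
    (hcorr : ∀ p : ℝ × ℝ,
      A0.mulVec (pt Φ1 p) + B0.mulVec (ps Φ1 p) + (fderiv ℝ c0 (Φ0 p)) (Φ1 p)
        = -(A1.mulVec (pt Φ0 p) + B1.mulVec (ps Φ0 p) + c1 (Φ0 p))) :
    ∀ Q : Set (ℝ × ℝ), IsCompact Q →
      ∃ C : ℝ, 0 ≤ C ∧ ∀ ε ∈ Set.Icc (0:ℝ) 1, ∀ p ∈ Q,
        ‖(A0 + ε ^ 2 • A1).mulVec (pt (fun q => Φ0 q + ε ^ 2 • Φ1 q) p)
            + (B0 + ε ^ 2 • B1).mulVec (ps (fun q => Φ0 q + ε ^ 2 • Φ1 q) p)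
            + c0 (Φ0 p + ε ^ 2 • Φ1 p) + ε ^ 2 • c1 (Φ0 p + ε ^ 2 • Φ1 p)‖
          ≤ C * ε ^ 4 := by
  intro Q hQ
  obtain ⟨K₀, -, hK₀⟩ := hQ.exists_pos_bound_of_continuous hΦ0.continuous
  obtain ⟨K₁, hK₁, hK₁Q⟩ := hQ.exists_pos_bound_of_continuous hΦ1.continuous
  obtain ⟨D, hD, hDQ⟩ := hQ.exists_pos_bound_of_continuous
    ((continuous_const.matrix_mulVec hΦ1.continuous_pt).add
      (continuous_const.matrix_mulVec hΦ1.continuous_ps) : Continuous fun p =>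
        A1 *ᵥ pt Φ1 p + B1 *ᵥ ps Φ1 p)
  set S : Set (Fin m → ℝ) := closedBall 0 (K₀ + K₁)
  obtain ⟨M, hM⟩ := ((hc0.fderiv_right le_rfl).contDiffOn (s := S)).exists_lipschitzOnWith
    one_ne_zero (convex_closedBall _ _) (isCompact_closedBall _ _)
  obtain ⟨L, hL⟩ := (hc1.contDiffOn (s := S)).exists_lipschitzOnWith
    one_ne_zero (convex_closedBall _ _) (isCompact_closedBall _ _)
  refine ⟨D + M * K₁ ^ 2 + L * K₁, by positivity, fun ε ⟨hε₀, hε₁⟩ p hp => ?_⟩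
  have hx : Φ0 p ∈ S := by
    simpa [S] using add_smul_mem_closedBall_zero (hK₀ p hp) (hK₁Q p hp) le_rfl zero_le_one
  have hxy : Φ0 p + ε ^ 2 • Φ1 p ∈ S :=
    add_smul_mem_closedBall_zero (hK₀ p hp) (hK₁Q p hp) (by positivity) (pow_le_one₀ hε₀ hε₁)
  have hd0 := hΦ0.differentiable one_ne_zero
  have hd1 := hΦ1.differentiable one_ne_zero
  rw [pt_add_smul hd0 hd1, ps_add_smul hd0 hd1]
  calc _ ≤ (ε ^ 2) ^ 2 * (‖A1 *ᵥ pt Φ1 p + B1 *ᵥ ps Φ1 p‖ + M * ‖Φ1 p‖ ^ 2 + L * ‖Φ1 p‖) :=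
        norm_residual_le (convex_closedBall _ _) (hc0.differentiable two_ne_zero) hM hL hx hxy
          (by positivity) (hlimit p) (hcorr p)
    _ ≤ (D + M * K₁ ^ 2 + L * K₁) * ε ^ 4 := by
        rw [← pow_mul, mul_comm]
        gcongr
        exacts [hDQ p hp, hK₁Q p hp, hK₁Q p hp]
end
end

section
/- Let m ∈ ℕ, let A⁰, A¹, B⁰, B¹ be real m×m matrices, let c⁰ : ℝᵐ → ℝᵐ be continuously differentiable and c¹ : ℝᵐ → ℝᵐ be continuous. Let Φ⁰, Φ¹ : ℝ² → ℝᵐ be continuously differentiable, and for each ε ∈ (0,1] let R_ε : ℝ² → ℝᵐ be continuously differentiable such that R_ε, ∂_tR_ε and ∂_sR_ε are bounded on every compact set uniformly in ε. If for every ε ∈ (0,1] the function Φ_ε := Φ⁰ + ε²Φ¹ + ε⁴R_ε satisfies (A⁰ + ε²A¹)·∂_tΦ_ε + (B⁰ + ε²B¹)·∂_sΦ_ε + c⁰(Φ_ε) + ε²c¹(Φ_ε) = 0 everywhere, then Φ⁰ satisfies the limit system A⁰·∂_tΦ⁰ + B⁰·∂_sΦ⁰ + c⁰(Φ⁰) =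 0 and Φ¹ satisfies the first-order correction system A⁰·∂_tΦ¹ + B⁰·∂_sΦ¹ + (Dc⁰)(Φ⁰)·Φ¹ = −(A¹·∂_tΦ⁰ + B¹·∂_sΦ⁰ + c¹(Φ⁰)). -/
/-!
Fix a point `p`. Evaluated at `p`, every ingredient of the `ε`-system has the form
`x + ε² y + o(ε²)` as `ε → 0⁺`: the values and partial derivatives of `Φ_ε` because the
remainder terms are bounded near `p` uniformly in `ε`, the matrix products by bilinearity,
`c⁰(Φ_ε)` by the chain rule at `Φ⁰(p)`, and `ε² c¹(Φ_ε)` by continuity of `c¹`. Such expansions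
add, and an expression that vanishes for all small `ε` has both coefficients zero: the
`ε⁰`-coefficient is the limit system, the `ε²`-coefficient the first-order correction system.
-/

noncomputable section

open Filter Topology Asymptotics

section PartialDerivatives

variable {E : Type*} [NormedAddCommGroup E] [NormedSpace ℝ E] {f g : ℝ × ℝ → E} {p : ℝ × ℝ}

theorem hasDerivAt_pt (hf : DifferentiableAt ℝ f p) :
    HasDerivAt (fun t => f (p.1, t)) (pt f p) p.2 :=
  (hf.comp p.2 (by fun_prop)).hasDerivAt

theorem hasDerivAt_ps (hf : DifferentiableAt ℝ f p) :
    HasDerivAt (fun s => f (s, p.2)) (ps f p) p.1 :=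
  (hf.comp p.1 (by fun_prop)).hasDerivAt

theorem pt_add (hf : DifferentiableAt ℝ f p) (hg : DifferentiableAt ℝ g p) :
    pt (fun q => f q + g q) p = pt f p + pt g p :=
  ((hasDerivAt_pt hf).add (hasDerivAt_pt hg)).deriv

theorem ps_add (hf : DifferentiableAt ℝ f p) (hg : DifferentiableAt ℝ g p) :
    ps (fun q => f q + g q) p = ps f p + ps g p :=
  ((hasDerivAt_ps hf).add (hasDerivAt_ps hg)).deriv

theorem pt_const_smul (a : ℝ) (hf : DifferentiableAt ℝ f p) :
    pt (fun q => a • f q) p = a • pt f p :=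
  ((hasDerivAt_pt hf).const_smul a).deriv

theorem ps_const_smul (a : ℝ) (hf : DifferentiableAt ℝ f p) :
    ps (fun q => a • f q) p = a • ps f p :=
  ((hasDerivAt_ps hf).const_smul a).deriv

end PartialDerivatives

/-- `f ε = x + ε² • y + o(ε²)` as `ε → 0⁺`. -/
def HasSqExpansion {V : Type*} [NormedAddCommGroup V] [NormedSpace ℝ V]
    (f : ℝ → V) (x y : V) : Prop :=
  Tendsto (fun ε : ℝ => (ε ^ 2)⁻¹ • (f ε - x)) (𝓝[>] 0) (𝓝 y)

theorem eventually_sq_ne_zero_nhdsGT : ∀ᶠ ε : ℝ in 𝓝[>] 0, ε ^ 2 ≠ 0 :=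
  eventually_nhdsWithin_of_forall fun _ hε => pow_ne_zero 2 (ne_of_gt hε)

theorem tendsto_sq_nhdsGT_zero : Tendsto (fun ε : ℝ => ε ^ 2) (𝓝[>] 0) (𝓝 0) := by
  simpa using ((continuous_pow 2).tendsto (0 : ℝ)).mono_left nhdsWithin_le_nhds

namespace HasSqExpansion

variable {V W : Type*} [NormedAddCommGroup V] [NormedSpace ℝ V]
  [NormedAddCommGroup W] [NormedSpace ℝ W] {f g : ℝ → V} {x x' y y' : V}

theorem tendsto (hf : HasSqExpansion f x y) : Tendsto f (𝓝[>] 0) (𝓝 x) := by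
  have h := tendsto_const_nhds (x := x) |>.add (tendsto_sq_nhdsGT_zero.smul hf)
  rw [zero_smul, add_zero] at h
  refine h.congr' ?_
  filter_upwards [eventually_sq_ne_zero_nhdsGT] with ε hε
  rw [smul_inv_smul₀ hε, add_sub_cancel]

theorem add (hf : HasSqExpansion f x y) (hg : HasSqExpansion g x' y') :
    HasSqExpansion (fun ε => f ε + g ε) (x + x') (y + y') := by
  refine (Tendsto.add hf hg).congr fun ε => ?_
  simp only [add_sub_add_comm, smul_add]

theorem map_continuousLinearMap (L : V →L[ℝ] W) (hf : HasSqExpansion f x y) :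
    HasSqExpansion (fun ε => L (f ε)) (L x) (L y) := by
  refine ((L.continuous.tendsto y).comp hf).congr fun ε => ?_
  simp only [Function.comp_apply, map_sub, map_smul]

theorem sq_smul {g : ℝ → V} {z : V} (hg : Tendsto g (𝓝[>] 0) (𝓝 z)) :
    HasSqExpansion (fun ε => ε ^ 2 • g ε) 0 z := by
  refine hg.congr' ?_
  filter_upwards [eventually_sq_ne_zero_nhdsGT] with ε hε
  rw [sub_zero, inv_smul_smul₀ hε]

theorem of_isBoundedUnder (x y : V) {g : ℝ → V}
    (hg : IsBoundedUnder (· ≤ ·) (𝓝[>] 0) (norm ∘ g)) :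
    HasSqExpansion (fun ε => x + ε ^ 2 • y + ε ^ 4 • g ε) x y := by
  have h : Tendsto (fun ε : ℝ => y + ε ^ 2 • g ε) (𝓝[>] 0) (𝓝 y) := by
    simpa using tendsto_const_nhds.add (tendsto_sq_nhdsGT_zero.zero_smul_isBoundedUnder_le hg)
  refine (sq_smul h).congr fun ε => ?_
  congr 1
  module

theorem comp_hasFDerivAt {c : V → W} {D : V →L[ℝ] W} (hc : HasFDerivAt c D x)
    (hf : HasSqExpansion f x y) : HasSqExpansion (fun ε => c (f ε)) (c x) (D y) := by
  have hsmall : (fun ε => c (f ε) - c x - D (f ε - x)) =o[𝓝[>] 0] fun ε => ε ^ 2 := by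
    have hO : (fun ε => f ε - x) =O[𝓝[>] 0] fun ε => ε ^ 2 := by
      have h := (isBigO_refl (fun ε : ℝ => ε ^ 2) (𝓝[>] 0)).smul (hf.isBigO_one ℝ)
      simp only [smul_eq_mul, mul_one] at h
      refine h.congr' ?_ (Eventually.of_forall fun _ => rfl)
      filter_upwards [eventually_sq_ne_zero_nhdsGT] with ε hε
      exact smul_inv_smul₀ hε _
    exact (hc.isLittleO.comp_tendsto hf.tendsto).trans_isBigO hO
  have h := hsmall.tendsto_inv_smul_nhds_zero.add (map_continuousLinearMap D hf)
  rw [zero_add] at h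
  refine h.congr fun ε => ?_
  simp only [map_sub, smul_sub, sub_add_cancel]

theorem matrix_mulVec {m n : Type*} [Fintype m] [Fintype n] (A0 A1 : Matrix m n ℝ)
    {w : ℝ → n → ℝ} {x y : n → ℝ} (hw : HasSqExpansion w x y) :
    HasSqExpansion (fun ε => (A0 + ε ^ 2 • A1).mulVec (w ε)) (A0.mulVec x)
      (A0.mulVec y + A1.mulVec x) := by
  have h0 := hw.map_continuousLinearMap (LinearMap.toContinuousLinearMap A0.mulVecLin)
  have h1 := sq_smul ((LinearMap.toContinuousLinearMap A1.mulVecLin).continuous.tendsto x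
    |>.comp hw.tendsto)
  simpa [Matrix.add_mulVec, Matrix.smul_mulVec] using h0.add h1

theorem eq_zero (hf : HasSqExpansion f x y) (h0 : ∀ᶠ ε in 𝓝[>] 0, f ε = 0) :
    x = 0 ∧ y = 0 := by
  have hx : x = 0 :=
    tendsto_nhds_unique hf.tendsto (tendsto_const_nhds.congr' (h0.mono fun _ h => h.symm))
  subst hx
  refine ⟨rfl, tendsto_nhds_unique hf (tendsto_const_nhds.congr' ?_)⟩
  filter_upwards [h0] with ε h
  rw [h, sub_zero, smul_zero]

end HasSqExpansion

/-- Converse direction of the asymptotic expansion: if for every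
`ε ∈ (0,1]` the function `Φ_ε = Φ⁰ + ε²Φ¹ + ε⁴R_ε` (with remainders `R_ε` whose values
and partial derivatives are bounded on compact sets uniformly in `ε`) solves the
ε-dependent system exactly, then `Φ⁰` solves the limit system and `Φ¹` the
first-order correction system. -/
theorem asymptotic_expansion_coefficients_solve_systems
    (m : ℕ) (A0 A1 B0 B1 : Matrix (Fin m) (Fin m) ℝ)
    (c0 : (Fin m → ℝ) → Fin m → ℝ) (hc0 : ContDiff ℝ 1 c0)
    (c1 : (Fin m → ℝ) → Fin m → ℝ) (hc1 : Continuous c1)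
    (Φ0 Φ1 : ℝ × ℝ → Fin m → ℝ) (hΦ0 : ContDiff ℝ 1 Φ0) (hΦ1 : ContDiff ℝ 1 Φ1)
    (R : ℝ → ℝ × ℝ → Fin m → ℝ)
    (hR : ∀ ε ∈ Set.Ioc (0:ℝ) 1, ContDiff ℝ 1 (R ε))
    (hRbound : ∀ Q : Set (ℝ × ℝ), IsCompact Q → ∃ M : ℝ,
      ∀ ε ∈ Set.Ioc (0:ℝ) 1, ∀ p ∈ Q,
        ‖R ε p‖ ≤ M ∧ ‖pt (R ε) p‖ ≤ M ∧ ‖ps (R ε) p‖ ≤ M)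
    (hsol : ∀ ε ∈ Set.Ioc (0:ℝ) 1, ∀ p : ℝ × ℝ,
      (A0 + ε ^ 2 • A1).mulVec
          (pt (fun q => Φ0 q + ε ^ 2 • Φ1 q + ε ^ 4 • R ε q) p)
        + (B0 + ε ^ 2 • B1).mulVec
          (ps (fun q => Φ0 q + ε ^ 2 • Φ1 q + ε ^ 4 • R ε q) p)
        + c0 (Φ0 p + ε ^ 2 • Φ1 p + ε ^ 4 • R ε p)
        + ε ^ 2 • c1 (Φ0 p + ε ^ 2 • Φ1 p + ε ^ 4 • R ε p) = 0) :
    (∀ p : ℝ × ℝ,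
      A0.mulVec (pt Φ0 p) + B0.mulVec (ps Φ0 p) + c0 (Φ0 p) = 0) ∧
    (∀ p : ℝ × ℝ,
      A0.mulVec (pt Φ1 p) + B0.mulVec (ps Φ1 p) + (fderiv ℝ c0 (Φ0 p)) (Φ1 p)
        = -(A1.mulVec (pt Φ0 p) + B1.mulVec (ps Φ0 p) + c1 (Φ0 p))) := by
  have hΦ0d := hΦ0.differentiable one_ne_zero
  have hΦ1d := hΦ1.differentiable one_ne_zero
  refine forall_and.mp fun p => ?_
  obtain ⟨M, hM⟩ := hRbound {p} isCompact_singleton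
  have hbdd {F : ℝ → Fin m → ℝ} (hF : ∀ ε ∈ Set.Ioc (0:ℝ) 1, ‖F ε‖ ≤ M) :
      IsBoundedUnder (· ≤ ·) (𝓝[>] 0) (norm ∘ F) :=
    isBoundedUnder_of_eventually_le (eventually_of_mem (Ioc_mem_nhdsGT one_pos) hF)
  have hx := HasSqExpansion.of_isBoundedUnder (Φ0 p) (Φ1 p)
    (hbdd fun ε hε => (hM ε hε p rfl).1)
  have ht := HasSqExpansion.of_isBoundedUnder (pt Φ0 p) (pt Φ1 p)
    (hbdd fun ε hε => (hM ε hε p rfl).2.1)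
  have hs := HasSqExpansion.of_isBoundedUnder (ps Φ0 p) (ps Φ1 p)
    (hbdd fun ε hε => (hM ε hε p rfl).2.2)
  have hF := (((ht.matrix_mulVec A0 A1).add (hs.matrix_mulVec B0 B1)).add
    (hx.comp_hasFDerivAt ((hc0.differentiable one_ne_zero _).hasFDerivAt))).add
    (HasSqExpansion.sq_smul ((hc1.tendsto _).comp hx.tendsto))
  obtain ⟨hlimit, hcorrection⟩ := hF.eq_zero <|
    eventually_of_mem (Ioc_mem_nhdsGT one_pos) fun ε hε => by
      have hRd := (hR ε hε).differentiable one_ne_zero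
      have hsolε := hsol ε hε p
      rwa [pt_add (by fun_prop) (by fun_prop), pt_add (by fun_prop) (by fun_prop),
        pt_const_smul _ (by fun_prop), pt_const_smul _ (by fun_prop),
        ps_add (by fun_prop) (by fun_prop), ps_add (by fun_prop) (by fun_prop),
        ps_const_smul _ (by fun_prop), ps_const_smul _ (by fun_prop)] at hsolε
  refine ⟨by simpa only [add_zero] using hlimit, ?_⟩
  rw [eq_neg_iff_add_eq_zero, ← hcorrection]
  abel
end
end

section
/- Let ε ≥ 0, μ > 0, a > 0, and set P_k = diag(1, 1, k) as 3×3 real matrices for k ∈ {2, 1/a, 2/a}. Let r̆, v, ω, n, κ : ℝ² → ℝ³ be continuously differentiable in (s,t), let D : ℝ² → Matrix (Fin 3) (Fin 3) ℝ with D(s,t)·D(s,t)ᵀ = 1 for all (s,t), and let V : ℝ³ → ℝ be continuously differentiable. Suppose the ε-dependent rod system holds everywhere: D·∂_t r̆ = v; ε²μ²a P_{1/a}·∂_t n = ∂_s v + κ × v + e₃ × ω + ε²μ²a (P_{1/a}·n) × ω; ∂_tκ = ∂_sω + κ × ω; ∂_t v = ∂_s n + κ × n + v × ω + D·(−∇V(r̆));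 and ε² P₂·∂_t ω = μ⁻²(P_{2/a}·∂_sκ + κ × (P_{2/a}·κ)) + e₃ × n + ε²(μ²a (P_{1/a}·n) × n + (P₂·ω) × ω). Then the energy density w_ε := ½‖v‖² + (ε²/2) ω·(P₂·ω) + (ε²μ²a/2) n·(P_{1/a}·n) + (2μ²)⁻¹ κ·(P_{2/a}·κ) + V(r̆) satisfies the local energy balance ∂_t w_ε = ∂_s (v·n + ω·m) everywhere, where m := μ⁻²P_{2/a}·κ. -/
open Matrix

noncomputable section

/-- Cross product on `ℝ³`. -/
def cross3 (a b : Fin 3 → ℝ) : Fin 3 → ℝ :=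
  ![a 1 * b 2 - a 2 * b 1, a 2 * b 0 - a 0 * b 2, a 0 * b 1 - a 1 * b 0]

/-- Coordinate gradient of a scalar function on `ℝ³`. -/
def grad3 (V : (Fin 3 → ℝ) → ℝ) (x : Fin 3 → ℝ) : Fin 3 → ℝ :=
  fun i => fderiv ℝ V x (Pi.single i 1)

/-- `P_k = diag(1,1,k)`. -/
def Pk (k : ℝ) : Matrix (Fin 3) (Fin 3) ℝ := Matrix.diagonal ![1, 1, k]

lemma hasDerivAt_comp_t {E : Type*} [NormedAddCommGroup E] [NormedSpace ℝ E]
    (f : ℝ × ℝ → E) (hf : ContDiff ℝ 1 f) (p : ℝ × ℝ) :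
    HasDerivAt (fun t => f (p.1, t)) (pt f p) p.2 := by
  have h : Differentiable ℝ (fun t : ℝ => f (p.1, t)) :=
    (hf.differentiable one_ne_zero).comp (differentiable_const _ |>.prodMk differentiable_id)
  exact (h p.2).hasDerivAt

lemma hasDerivAt_comp_s {E : Type*} [NormedAddCommGroup E] [NormedSpace ℝ E]
    (f : ℝ × ℝ → E) (hf : ContDiff ℝ 1 f) (p : ℝ × ℝ) :
    HasDerivAt (fun s => f (s, p.2)) (ps f p) p.1 := by
  have h : Differentiable ℝ (fun s : ℝ => f (s, p.2)) :=
    (hf.differentiable one_ne_zero).comp (differentiable_id.prodMk (differentiable_const _))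
  exact (h p.1).hasDerivAt

lemma HasDerivAt.proj3 {f : ℝ → Fin 3 → ℝ} {f' : Fin 3 → ℝ} {x : ℝ}
    (h : HasDerivAt f f' x) (i : Fin 3) : HasDerivAt (fun t => f t i) (f' i) x := by
  have := ((ContinuousLinearMap.proj (R := ℝ) (φ := fun _ : Fin 3 => ℝ) i).hasFDerivAt
      (x := f x)).comp_hasDerivAt x h
  exact this

lemma fderiv_eq_grad_dot (V : (Fin 3 → ℝ) → ℝ) (x w : Fin 3 → ℝ) :
    fderiv ℝ V x w = grad3 V x ⬝ᵥ w := by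
  have hw : w = w 0 • (Pi.single 0 1 : Fin 3 → ℝ) + w 1 • (Pi.single 1 1 : Fin 3 → ℝ)
      + w 2 • (Pi.single 2 1 : Fin 3 → ℝ) := by
    funext j; fin_cases j <;> simp [Pi.single_apply]
  rw [hw]
  simp [grad3, dotProduct, Fin.sum_univ_three, map_add, _root_.map_smul]
  ring

lemma HasDerivAt.dot3 {f g : ℝ → Fin 3 → ℝ} {f' g' : Fin 3 → ℝ} {x : ℝ}
    (hf : HasDerivAt f f' x) (hg : HasDerivAt g g' x) :
    HasDerivAt (fun t => f t ⬝ᵥ g t) (f' ⬝ᵥ g x + f x ⬝ᵥ g') x := by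
  simp only [dotProduct, Fin.sum_univ_three]
  have := (((hf.proj3 0).mul (hg.proj3 0)).add ((hf.proj3 1).mul (hg.proj3 1))).add
    ((hf.proj3 2).mul (hg.proj3 2))
  exact this.congr_deriv (by ring)

lemma HasDerivAt.mulVec3 {f : ℝ → Fin 3 → ℝ} {f' : Fin 3 → ℝ} {x : ℝ}
    (M : Matrix (Fin 3) (Fin 3) ℝ) (hf : HasDerivAt f f' x) :
    HasDerivAt (fun t => M.mulVec (f t)) (M.mulVec f') x := by
  have := ((M.mulVecLin.toContinuousLinearMap).hasFDerivAt (x := f x)).comp_hasDerivAt x hf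
  exact this

/-- local energy balance for the ε-dependent Cosserat rod system with
Euler–Bernoulli material law: `∂_t w_ε = ∂_s (v·n + ω·m)` with
`w_ε = ½‖v‖² + (ε²/2)ω·(P₂·ω) + (ε²μ²a/2)n·(P_{1/a}·n) + (2μ²)⁻¹κ·(P_{2/a}·κ) + V(r̆)`
and `m = μ⁻²P_{2/a}·κ`. -/
theorem cosserat_local_energy_balance
    (ε μ a : ℝ) (hε : 0 ≤ ε) (hμ : 0 < μ) (ha : 0 < a)
    (r v ω n κ : ℝ × ℝ → Fin 3 → ℝ)
    (hr : ContDiff ℝ 1 r) (hv : ContDiff ℝ 1 v) (hω : ContDiff ℝ 1 ω)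
    (hn : ContDiff ℝ 1 n) (hκ : ContDiff ℝ 1 κ)
    (D : ℝ × ℝ → Matrix (Fin 3) (Fin 3) ℝ)
    (hD : ∀ p : ℝ × ℝ, D p * (D p)ᵀ = 1)
    (V : (Fin 3 → ℝ) → ℝ) (hV : ContDiff ℝ 1 V)
    (hkin : ∀ p : ℝ × ℝ, (D p).mulVec (pt r p) = v p)
    (hstrain : ∀ p : ℝ × ℝ,
      (ε ^ 2 * μ ^ 2 * a) • (Pk a⁻¹).mulVec (pt n p)
        = ps v p + cross3 (κ p) (v p) + cross3 ![0, 0, 1] (ω p)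
          + (ε ^ 2 * μ ^ 2 * a) • cross3 ((Pk a⁻¹).mulVec (n p)) (ω p))
    (hcompat : ∀ p : ℝ × ℝ, pt κ p = ps ω p + cross3 (κ p) (ω p))
    (hlin : ∀ p : ℝ × ℝ,
      pt v p = ps n p + cross3 (κ p) (n p) + cross3 (v p) (ω p)
        + (D p).mulVec (-(grad3 V (r p))))
    (hang : ∀ p : ℝ × ℝ,
      (ε ^ 2) • (Pk 2).mulVec (pt ω p)
        = (μ ^ 2)⁻¹ • ((Pk (2 / a)).mulVec (ps κ p)
            + cross3 (κ p) ((Pk (2 / a)).mulVec (κ p)))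
          + cross3 ![0, 0, 1] (n p)
          + (ε ^ 2) • ((μ ^ 2 * a) • cross3 ((Pk a⁻¹).mulVec (n p)) (n p)
            + cross3 ((Pk 2).mulVec (ω p)) (ω p))) :
    ∀ p : ℝ × ℝ,
      pt (fun q => (1 / 2) * (v q ⬝ᵥ v q)
          + (ε ^ 2 / 2) * (ω q ⬝ᵥ (Pk 2).mulVec (ω q))
          + (ε ^ 2 * μ ^ 2 * a / 2) * (n q ⬝ᵥ (Pk a⁻¹).mulVec (n q))
          + (2 * μ ^ 2)⁻¹ * (κ q ⬝ᵥ (Pk (2 / a)).mulVec (κ q))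
          + V (r q)) p
        = ps (fun q => v q ⬝ᵥ n q
            + ω q ⬝ᵥ ((μ ^ 2)⁻¹ • (Pk (2 / a)).mulVec (κ q))) p := by
  intro p
  have hDo : (D p)ᵀ * D p = 1 := mul_eq_one_comm.mp (hD p)
  have hptr : pt r p = (D p)ᵀ.mulVec (v p) := by
    rw [← hkin p, Matrix.mulVec_mulVec, hDo, Matrix.one_mulVec]
  have Hv := hasDerivAt_comp_t v hv p
  have Hω := hasDerivAt_comp_t ω hω p
  have Hn := hasDerivAt_comp_t n hn p
  have Hκ := hasDerivAt_comp_t κ hκ p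
  have Hr := hasDerivAt_comp_t r hr p
  have HV : HasDerivAt (fun t => V (r (p.1, t))) (fderiv ℝ V (r p) (pt r p)) p.2 := by
    have hVd : HasFDerivAt V (fderiv ℝ V (r p)) (r p) :=
      (hV.differentiable one_ne_zero (r p)).hasFDerivAt
    exact hVd.comp_hasDerivAt p.2 Hr
  have HL : HasDerivAt (fun t => (1 / 2) * (v (p.1, t) ⬝ᵥ v (p.1, t))
      + (ε ^ 2 / 2) * (ω (p.1, t) ⬝ᵥ (Pk 2).mulVec (ω (p.1, t)))
      + (ε ^ 2 * μ ^ 2 * a / 2) * (n (p.1, t) ⬝ᵥ (Pk a⁻¹).mulVec (n (p.1, t)))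
      + (2 * μ ^ 2)⁻¹ * (κ (p.1, t) ⬝ᵥ (Pk (2 / a)).mulVec (κ (p.1, t)))
      + V (r (p.1, t)))
      ((1 / 2) * (pt v p ⬝ᵥ v p + v p ⬝ᵥ pt v p)
      + (ε ^ 2 / 2) * (pt ω p ⬝ᵥ (Pk 2).mulVec (ω p) + ω p ⬝ᵥ (Pk 2).mulVec (pt ω p))
      + (ε ^ 2 * μ ^ 2 * a / 2) * (pt n p ⬝ᵥ (Pk a⁻¹).mulVec (n p)
          + n p ⬝ᵥ (Pk a⁻¹).mulVec (pt n p))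
      + (2 * μ ^ 2)⁻¹ * (pt κ p ⬝ᵥ (Pk (2 / a)).mulVec (κ p)
          + κ p ⬝ᵥ (Pk (2 / a)).mulVec (pt κ p))
      + fderiv ℝ V (r p) (pt r p)) p.2 :=
    (((((Hv.dot3 Hv).const_mul (1 / 2)).add
      ((Hω.dot3 (HasDerivAt.mulVec3 (Pk 2) Hω)).const_mul (ε ^ 2 / 2))).add
      ((Hn.dot3 (HasDerivAt.mulVec3 (Pk a⁻¹) Hn)).const_mul (ε ^ 2 * μ ^ 2 * a / 2))).add
      ((Hκ.dot3 (HasDerivAt.mulVec3 (Pk (2 / a)) Hκ)).const_mul ((2 * μ ^ 2)⁻¹))).add HV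
  have Hvs := hasDerivAt_comp_s v hv p
  have Hωs := hasDerivAt_comp_s ω hω p
  have Hns := hasDerivAt_comp_s n hn p
  have Hκs := hasDerivAt_comp_s κ hκ p
  have HS : HasDerivAt (fun s => v (s, p.2) ⬝ᵥ n (s, p.2)
      + ω (s, p.2) ⬝ᵥ ((μ ^ 2)⁻¹ • (Pk (2 / a)).mulVec (κ (s, p.2))))
      ((ps v p ⬝ᵥ n p + v p ⬝ᵥ ps n p)
      + (ps ω p ⬝ᵥ ((μ ^ 2)⁻¹ • (Pk (2 / a)).mulVec (κ p))
          + ω p ⬝ᵥ ((μ ^ 2)⁻¹ • (Pk (2 / a)).mulVec (ps κ p)))) p.1 :=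
    (Hvs.dot3 Hns).add
      (Hωs.dot3 ((HasDerivAt.mulVec3 (Pk (2 / a)) Hκs).const_smul ((μ ^ 2)⁻¹)))
  simp only [pt, ps]
  rw [HL.deriv, HS.deriv]
  rw [show pt r p = (D p)ᵀ.mulVec (v p) from hptr, fderiv_eq_grad_dot,
    Matrix.dotProduct_mulVec (grad3 V (r p)) ((D p)ᵀ) (v p), Matrix.vecMul_transpose]
  have h1 := hstrain p
  have h2 := hcompat p
  have h3 := hlin p
  have h4 := hang p
  rw [Matrix.mulVec_neg] at h3
  have e10 := congrFun h1 0; have e11 := congrFun h1 1; have e12 := congrFun h1 2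
  have e20 := congrFun h2 0; have e21 := congrFun h2 1; have e22 := congrFun h2 2
  have e30 := congrFun h3 0; have e31 := congrFun h3 1; have e32 := congrFun h3 2
  have e40 := congrFun h4 0; have e41 := congrFun h4 1; have e42 := congrFun h4 2
  simp only [cross3, Pk, Matrix.mulVec_diagonal, dotProduct, Fin.sum_univ_three,
    Matrix.cons_val_zero, Matrix.cons_val_one, Matrix.head_cons, Matrix.cons_val_two,
    Matrix.tail_cons, Pi.add_apply, Pi.smul_apply, Pi.neg_apply, smul_eq_mul]
    at e10 e11 e12 e20 e21 e22 e30 e31 e32 e40 e41 e42 ⊢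
  linear_combination (v p 0) * e30 + (v p 1) * e31 + (v p 2) * e32
    + (ω p 0) * e40 + (ω p 1) * e41 + (ω p 2) * e42
    + (n p 0) * e10 + (n p 1) * e11 + (n p 2) * e12
    + ((μ ^ 2)⁻¹ * κ p 0) * e20 + ((μ ^ 2)⁻¹ * κ p 1) * e21
    + ((μ ^ 2)⁻¹ * (2 / a) * κ p 2) * e22
end
end
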